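/- arXiv:1506.04586 — 2 statements merged into one kernel-verified Lean document; each statement's English description precedes it below -/
import Mathlib

section
/- Let p > 2 and k > 0, and set q(a, a_θ) = (a_θ² + k²a²)^{(4-p)/2}·(a_θ² + (p-1)k²a²)^{-1} and τ(a, a_θ) = -(a_θ² + k²a²)^{(p-4)/2}(p-2)k·a·a_θ. Suppose a: ℝ → ℝ is smooth, satisfies a_{θθ} = -V(a, a_θ)a with V = ((2p-3)k² - (p-2)k)a_θ² + ((p-1)k² - (p-2)k)k²a²)/((p-1)a_θ² + k²a²), and (a(θ), a_θ(θ)) ≠ (0,0) for all θ. If θ₀ is a point with a_θ(θ₀) = 0 and a(θ₀) ≠ 0, and furthermore V(a(θ₀), 0) > 0 when p = 4, then in the case p = 4 one has d/dθ|_{θ=θ₀}(τ(a,a_θ)q(a,a_θ)) = 2V(a(θ₀),0)/(3k) > 0. -/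
/-- The potential `V` for `p = 4`. -/
noncomputable def V4 (k x y : ℝ) : ℝ :=
  ((5*k^2 - 2*k)*y^2 + (3*k^2 - 2*k)*k^2*x^2) / (3*y^2 + k^2*x^2)

theorem stmt_9 (k : ℝ) (hk : 0 < k) (a : ℝ → ℝ)
    (ha : ContDiff ℝ (⊤ : ℕ∞) a)
    (hODE : ∀ θ, deriv (deriv a) θ = -(V4 k (a θ) (deriv a θ)) * a θ)
    (hne : ∀ θ, (a θ, deriv a θ) ≠ (0, 0))
    (θ₀ : ℝ) (h1 : deriv a θ₀ = 0) (h2 : a θ₀ ≠ 0)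
    (hV : 0 < V4 k (a θ₀) 0) :
    deriv (fun θ =>
        -(((deriv a θ)^2 + 3*k^2*(a θ)^2)⁻¹ * (2*k*(a θ)*(deriv a θ)))) θ₀
      = 2 * V4 k (a θ₀) 0 / (3*k)
    ∧ 0 < 2 * V4 k (a θ₀) 0 / (3*k) := by
  have hd : Differentiable ℝ a := ha.differentiable (by simp)
  have ha2 : ContDiff ℝ ((⊤:ℕ∞):WithTop ℕ∞) a := ha.of_le (by simp)
  have hd2 : Differentiable ℝ (deriv a) :=
    (contDiff_infty_iff_deriv.mp ha2).2.differentiable (by simp)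
  have ha' : HasDerivAt a (deriv a θ₀) θ₀ := (hd θ₀).hasDerivAt
  have hb : HasDerivAt (deriv a) (deriv (deriv a) θ₀) θ₀ := (hd2 θ₀).hasDerivAt
  set c := deriv (deriv a) θ₀ with hc
  have hcval : c = -(V4 k (a θ₀) 0) * a θ₀ := by rw [hc, hODE θ₀, h1]
  have hD0 : (deriv a θ₀)^2 + 3*k^2*(a θ₀)^2 ≠ 0 := by
    rw [h1]; positivity
  have hden : HasDerivAt (fun θ => (deriv a θ)^2 + 3*k^2*(a θ)^2)
      ((2:ℕ)*(deriv a θ₀)^1*c + 3*k^2*((2:ℕ)*(a θ₀)^1*(deriv a θ₀))) θ₀ := by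
    exact (hb.pow 2).add ((ha'.pow 2).const_mul (3*k^2))
  have hnum : HasDerivAt (fun θ => 2*k*(a θ)*(deriv a θ))
      ((0 * a θ₀ + 2*k*(deriv a θ₀)) * (deriv a θ₀) + (2*k*(a θ₀)) * c) θ₀ :=
    ((hasDerivAt_const θ₀ (2*k)).mul ha').mul hb
  have hfull : HasDerivAt (fun θ =>
        -(((deriv a θ)^2 + 3*k^2*(a θ)^2)⁻¹ * (2*k*(a θ)*(deriv a θ)))) _ θ₀ :=
    ((hden.inv hD0).mul hnum).neg
  constructor
  · rw [hfull.deriv]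
    simp only [Pi.inv_apply]
    rw [hcval, h1]
    have hk' : k ≠ 0 := ne_of_gt hk
    field_simp
    ring
  · positivity
end

section
/- Let p = 4 and k > 0. Define q(θ) = (a_θ(θ)² + 3k²a(θ)²)^{-1} where a is smooth with a_{θθ} = -V a, V = ((5k²-2k)a_θ² + (3k²-2k)k²a²)/(3a_θ² + k²a²), and (a, a_θ) never both vanish. If θ₀ is a point with a(θ₀) = 0 (so a_θ(θ₀) ≠ 0), then q''(θ₀) < 0, i.e. θ₀ is a strict local maximum of q. -/
theorem stmt_10 (k : ℝ) (hk : 0 < k) (a : ℝ → ℝ)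
    (ha : ContDiff ℝ (⊤ : ℕ∞) a)
    (hODE : ∀ θ, deriv (deriv a) θ = -(V4 k (a θ) (deriv a θ)) * a θ)
    (hne : ∀ θ, (a θ, deriv a θ) ≠ (0, 0))
    (θ₀ : ℝ) (h0 : a θ₀ = 0) :
    deriv (deriv (fun θ => ((deriv a θ)^2 + 3*k^2*(a θ)^2)⁻¹)) θ₀ < 0
    ∧ ∃ ε > 0, ∀ θ, θ ≠ θ₀ → |θ - θ₀| < ε →
        ((deriv a θ)^2 + 3*k^2*(a θ)^2)⁻¹
          < ((deriv a θ₀)^2 + 3*k^2*(a θ₀)^2)⁻¹ := by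
  have ha : ContDiff ℝ ((⊤:ℕ∞) : WithTop ℕ∞) a := ha.of_le (by simp)
  have hd1 : Differentiable ℝ a := ha.differentiable (by simp)
  have hca' : ContDiff ℝ ((⊤:ℕ∞) : WithTop ℕ∞) (deriv a) := (contDiff_infty_iff_deriv.mp ha).2
  have hd2 : Differentiable ℝ (deriv a) := hca'.differentiable (by simp)
  -- the function E and its positivity
  set E : ℝ → ℝ := fun θ => (deriv a θ)^2 + 3*k^2*(a θ)^2 with hEdef
  have hEc : ContDiff ℝ ((⊤:ℕ∞) : WithTop ℕ∞) E := by
    rw [hEdef]; exact (hca'.pow 2).add (contDiff_const.mul (ha.pow 2))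
  have hEpos : ∀ θ, 0 < E θ := by
    intro θ
    have h := hne θ
    rcases eq_or_ne (deriv a θ) 0 with h1 | h1
    · have h2 : a θ ≠ 0 := by
        intro h2; exact h (by rw [h1, h2])
      have h3 : 0 < (a θ)^2 := (sq_nonneg _).lt_of_ne' (pow_ne_zero 2 h2)
      have : 0 < E θ := by
        rw [hEdef]; dsimp only; nlinarith [sq_nonneg (deriv a θ), pow_pos hk 2]
      exact this
    · have h3 : 0 < (deriv a θ)^2 := (sq_nonneg _).lt_of_ne' (pow_ne_zero 2 h1)
      rw [hEdef]; dsimp only; nlinarith [sq_nonneg (a θ), sq_nonneg (k * a θ)]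
  -- the denominator of V4 is positive
  have hDpos : ∀ θ, 0 < 3*(deriv a θ)^2 + k^2*(a θ)^2 := by
    intro θ
    have h := hne θ
    rcases eq_or_ne (deriv a θ) 0 with h1 | h1
    · have h2 : a θ ≠ 0 := by intro h2; exact h (by rw [h1, h2])
      have h3 : 0 < (a θ)^2 := (sq_nonneg _).lt_of_ne' (pow_ne_zero 2 h2)
      nlinarith [sq_nonneg (deriv a θ), pow_pos hk 2]
    · have h3 : 0 < (deriv a θ)^2 := (sq_nonneg _).lt_of_ne' (pow_ne_zero 2 h1)
      nlinarith [sq_nonneg (k * a θ)]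
  -- g is differentiable
  have hgq : (fun θ => V4 k (a θ) (deriv a θ))
      = fun θ => ((5*k^2 - 2*k)*(deriv a θ)^2 + (3*k^2 - 2*k)*k^2*(a θ)^2)
          / (3*(deriv a θ)^2 + k^2*(a θ)^2) := rfl
  have hgdiff : Differentiable ℝ (fun θ => V4 k (a θ) (deriv a θ)) := by
    rw [hgq]
    exact Differentiable.div (by fun_prop) (by fun_prop) (fun θ => (hDpos θ).ne')
  -- the auxiliary function h
  set hh : ℝ → ℝ := fun θ => 2*(deriv a θ)*(3*k^2 - V4 k (a θ) (deriv a θ)) with hhdef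
  have hhdiff : Differentiable ℝ hh := by
    rw [hhdef]
    exact (differentiable_const _ |>.mul hd2).mul ((differentiable_const _).sub hgdiff)
  -- derivative of E
  have hEderiv : ∀ θ, HasDerivAt E (a θ * hh θ) θ := by
    intro θ
    have h1 : HasDerivAt (fun t => (deriv a t)^2)
        (2 * deriv a θ * deriv (deriv a) θ) θ := by
      have := ((hd2 θ).hasDerivAt).fun_pow 2
      simp at this
      exact this
    have h2 : HasDerivAt (fun t => 3*k^2*(a t)^2)
        (3*k^2*(2 * a θ * deriv a θ)) θ := by
      have h : HasDerivAt (fun t => 3*k^2*(a t)^2) _ θ := (((hd1 θ).hasDerivAt).fun_pow 2).const_mul (3*k^2)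
      convert h using 1
      push_cast
      ring
    have h3 : HasDerivAt (fun t => (deriv a t)^2 + 3*k^2*(a t)^2) _ θ := h1.add h2
    rw [hEdef, hhdef]
    convert h3 using 1
    rw [hODE θ]
    ring
  -- derivative of q
  set q : ℝ → ℝ := fun θ => ((deriv a θ)^2 + 3*k^2*(a θ)^2)⁻¹ with hqdef
  have hqE : q = fun θ => (E θ)⁻¹ := rfl
  have hq'at : ∀ θ, HasDerivAt q (-(a θ * hh θ) / (E θ)^2) θ := by
    intro θ
    rw [hqE]
    exact (hEderiv θ).inv (hEpos θ).ne'
  have hq'eq : deriv q = fun θ => -(a θ * hh θ) / (E θ)^2 :=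
    funext fun θ => (hq'at θ).deriv
  have hne0 : deriv a θ₀ ≠ 0 := by
    intro h
    exact hne θ₀ (by rw [h0, h])
  -- value of V4 at θ₀
  have hV0 : V4 k (a θ₀) (deriv a θ₀) = (5*k^2 - 2*k)/3 := by
    rw [h0]
    unfold V4
    rw [show ((0:ℝ))^2 = 0 by ring]
    field_simp
    ring
  -- second derivative of q at θ₀
  have hNat : HasDerivAt (fun θ => -(a θ * hh θ))
      (-(deriv a θ₀ * hh θ₀ + a θ₀ * deriv hh θ₀)) θ₀ :=
    (((hd1 θ₀).hasDerivAt).mul ((hhdiff θ₀).hasDerivAt)).neg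
  have hDat : HasDerivAt (fun θ => (E θ)^2)
      ((2:ℕ) * (E θ₀)^(2-1) * (a θ₀ * hh θ₀)) θ₀ := (hEderiv θ₀).pow 2
  have hq''at : HasDerivAt (deriv q)
      ((-(deriv a θ₀ * hh θ₀ + a θ₀ * deriv hh θ₀) * (E θ₀)^2
        - -(a θ₀ * hh θ₀) * ((2:ℕ) * (E θ₀)^(2-1) * (a θ₀ * hh θ₀))) / ((E θ₀)^2)^2) θ₀ := by
    rw [hq'eq]
    exact hNat.div hDat (by positivity)
  have hhh0 : hh θ₀ = 2 * deriv a θ₀ * ((4*k^2 + 2*k)/3) := by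
    rw [hhdef]; dsimp only; rw [hV0]; ring
  have hq''val : deriv (deriv q) θ₀
      = -(2 * (deriv a θ₀)^2 * ((4*k^2 + 2*k)/3)) / (E θ₀)^2 := by
    rw [hq''at.deriv, h0, hhh0]
    have hE0 : (0:ℝ) < E θ₀ := hEpos θ₀
    field_simp
    ring
  have hq''neg : deriv (deriv q) θ₀ < 0 := by
    rw [hq''val]
    have h1 : 0 < (deriv a θ₀)^2 := (sq_nonneg _).lt_of_ne' (pow_ne_zero 2 hne0)
    have h2 : 0 < E θ₀ := hEpos θ₀
    have h3 : 0 < 2 * (deriv a θ₀)^2 * ((4*k^2 + 2*k)/3) := by positivity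
    exact div_neg_of_neg_of_pos (by linarith) (by positivity)
  refine ⟨hq''neg, ?_⟩
  -- continuity of the second derivative
  have hqc : ContDiff ℝ ((⊤:ℕ∞) : WithTop ℕ∞) q := by
    rw [hqE]; exact hEc.inv (fun θ => (hEpos θ).ne')
  have hq'c : ContDiff ℝ ((⊤:ℕ∞) : WithTop ℕ∞) (deriv q) := (contDiff_infty_iff_deriv.mp hqc).2
  have hq''cont : Continuous (deriv (deriv q)) :=
    ((contDiff_infty_iff_deriv.mp hq'c).2).continuous
  -- choose ε
  have hopen : IsOpen ((deriv (deriv q)) ⁻¹' Set.Iio 0) :=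
    isOpen_Iio.preimage hq''cont
  obtain ⟨ε, hε, hball⟩ := Metric.isOpen_iff.mp hopen θ₀ hq''neg
  have hq'0 : deriv q θ₀ = 0 := by rw [hq'eq]; simp [h0]
  -- deriv q is strictly decreasing on the interval
  have hSA : StrictAntiOn (deriv q) (Set.Ioo (θ₀ - ε) (θ₀ + ε)) := by
    apply strictAntiOn_of_deriv_neg (convex_Ioo _ _)
      (hq'c.continuous.continuousOn)
    intro x hx
    rw [interior_Ioo] at hx
    apply hball
    rw [Metric.mem_ball, Real.dist_eq, abs_sub_lt_iff]
    constructor <;> [linarith [hx.2]; linarith [hx.1]]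
  have hθ₀mem : θ₀ ∈ Set.Ioo (θ₀ - ε) (θ₀ + ε) := by
    constructor <;> linarith
  refine ⟨ε, hε, ?_⟩
  intro θ hθne hθε
  rw [abs_sub_lt_iff] at hθε
  show q θ < q θ₀
  rcases lt_or_gt_of_ne hθne with hlt | hgt
  · -- θ < θ₀ : q strictly increasing on [θ, θ₀]
    have hmono : StrictMonoOn q (Set.Icc θ θ₀) := by
      apply strictMonoOn_of_deriv_pos (convex_Icc _ _)
        (hqc.continuous.continuousOn)
      intro x hx
      rw [interior_Icc] at hx
      have hxmem : x ∈ Set.Ioo (θ₀ - ε) (θ₀ + ε) := by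
        constructor <;> [linarith [hx.1, hθε.2]; linarith [hx.2]]
      have := hSA hxmem hθ₀mem hx.2
      rw [hq'0] at this
      exact this
    exact hmono (Set.left_mem_Icc.mpr hlt.le) (Set.right_mem_Icc.mpr hlt.le) hlt
  · -- θ₀ < θ : q strictly decreasing on [θ₀, θ]
    have hanti : StrictAntiOn q (Set.Icc θ₀ θ) := by
      apply strictAntiOn_of_deriv_neg (convex_Icc _ _)
        (hqc.continuous.continuousOn)
      intro x hx
      rw [interior_Icc] at hx
      have hxmem : x ∈ Set.Ioo (θ₀ - ε) (θ₀ + ε) := by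
        constructor <;> [linarith [hx.1]; linarith [hx.2, hθε.1]]
      have := hSA hθ₀mem hxmem hx.1
      rw [hq'0] at this
      exact this
    exact hanti (Set.left_mem_Icc.mpr hgt.le) (Set.right_mem_Icc.mpr hgt.le) hgt
end
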